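/- arXiv:2208.02766 — 3 statements merged into one kernel-verified Lean document; each statement's English description precedes it below -/
import Mathlib

section
/- Merging two voters with identical preference orders is safe: if voters v₁ and v₂ satisfy util_{v₁}(p) > util_{v₁}(p') ↔ util_{v₂}(p) > util_{v₂}(p') for all items p, p' (identical preference orders), and we replace them by a single voter v₁₂ with util_{v₁₂}(p) = util_{v₁}(p) + util_{v₂}(p), then for every bundle Z ⊆ P the total λ-median satisfaction in the new instance equals the total λ-median satisfaction in the original instance. Consequently, a bundle of cost at most b with total satisfaction at least u_tgt exists in one instance iff it exists in the other. -/
/-!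
Voters with identical preference orders can list any bundle in one common order that sorts
both utility functions, and hence also their sum. The λ-th largest utility is then read off the
same position of that list for `u₁`, `u₂` and `u₁ + u₂`, so the median satisfactions add up.
-/

/-- The λ-median satisfaction of a voter with utility function `util` from a bundle `Z`:
the λ-th largest utility (with multiplicity) among items of `Z`, or `0` if `|Z| < λ`. -/
def medSat {P : Type*} (util : P → ℕ) (lam : ℕ) (Z : Finset P) : ℕ :=
  if 1 ≤ lam ∧ lam ≤ Z.card then ((Z.val.map util).sort (· ≤ ·)).getD (Z.card - lam) 0
  else 0

namespace Multiset

variable {α β : Type*}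

theorem exists_coe_eq_pairwise_map_le [LinearOrder β] (s : Multiset α) (f : α → β) :
    ∃ l : List α, (l : Multiset α) = s ∧ (l.map f).Pairwise (· ≤ ·) := by
  refine ⟨s.toList.mergeSort (fun a b => decide (f a ≤ f b)), ?_, ?_⟩
  · rw [coe_eq_coe.2 (List.mergeSort_perm _ _), coe_toList]
  · refine List.pairwise_map.2 ((List.pairwise_mergeSort ?_ ?_ _).imp (by simp))
    · simpa using fun _ _ _ => le_trans
    · simpa using fun a b => le_total (f a) (f b)

theorem sort_map_coe_of_pairwise [LinearOrder β] {l : List α} {f : α → β}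
    (h : (l.map f).Pairwise (· ≤ ·)) : ((l : Multiset α).map f).sort (· ≤ ·) = l.map f := by
  rw [map_coe, coe_sort, List.mergeSort_eq_self _ h]

theorem getD_sort_map_add [AddCommMonoid β] [LinearOrder β] [IsOrderedAddMonoid β]
    (s : Multiset α) {f g : α → β} (hfg : ∀ a ∈ s, ∀ b ∈ s, f a ≤ f b → g a ≤ g b) (i : ℕ) :
    ((s.map fun a => f a + g a).sort (· ≤ ·)).getD i 0 =
      ((s.map f).sort (· ≤ ·)).getD i 0 + ((s.map g).sort (· ≤ ·)).getD i 0 := by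
  obtain ⟨l, rfl, hf⟩ := exists_coe_eq_pairwise_map_le s f
  have hg : (l.map g).Pairwise (· ≤ ·) :=
    List.pairwise_map.2 <| (List.pairwise_map.1 hf).imp_of_mem fun ha hb => hfg _ ha _ hb
  have hsum : (l.map fun a => f a + g a).Pairwise (· ≤ ·) :=
    List.pairwise_map.2 <| (List.pairwise_map.1 hf).imp_of_mem fun ha hb hab =>
      add_le_add hab (hfg _ ha _ hb hab)
  rw [sort_map_coe_of_pairwise hf, sort_map_coe_of_pairwise hg, sort_map_coe_of_pairwise hsum]
  simp only [List.getD_eq_getElem?_getD, List.getElem?_map]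
  cases l[i]? <;> simp

end Multiset

theorem medSat_add_of_le_imp_le {P : Type*} {u₁ u₂ : P → ℕ}
    (h : ∀ p q, u₁ p ≤ u₁ q → u₂ p ≤ u₂ q) (lam : ℕ) (Z : Finset P) :
    medSat (fun p => u₁ p + u₂ p) lam Z = medSat u₁ lam Z + medSat u₂ lam Z := by
  unfold medSat
  split_ifs
  · exact Z.val.getD_sort_map_add (fun p _ q _ => h p q) _
  · rfl

theorem stmt2_general {P W : Type*} [Fintype W]
    (c : P → ℕ) (u₁ u₂ : P → ℕ) (utilW : W → P → ℕ) (lam b tgt : ℕ)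
    (hsame : ∀ p p', u₁ p > u₁ p' ↔ u₂ p > u₂ p') :
    (∀ Z : Finset P,
      medSat u₁ lam Z + medSat u₂ lam Z = medSat (fun p => u₁ p + u₂ p) lam Z) ∧
    ((∃ Z : Finset P, (∑ q ∈ Z, c q) ≤ b ∧
        tgt ≤ (∑ w : W, medSat (utilW w) lam Z) + (medSat u₁ lam Z + medSat u₂ lam Z)) ↔
      (∃ Z : Finset P, (∑ q ∈ Z, c q) ≤ b ∧
        tgt ≤ (∑ w : W, medSat (utilW w) lam Z) + medSat (fun p => u₁ p + u₂ p) lam Z)) := by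
  have hle : ∀ p q, u₁ p ≤ u₁ q → u₂ p ≤ u₂ q := fun p q => by
    simpa only [gt_iff_lt, not_lt] using (not_congr (hsame p q)).1
  have hmerge : ∀ Z : Finset P,
      medSat u₁ lam Z + medSat u₂ lam Z = medSat (fun p => u₁ p + u₂ p) lam Z :=
    fun Z => (medSat_add_of_le_imp_le hle lam Z).symm
  exact ⟨hmerge, by simp only [hmerge]⟩

/-- Merging two voters `v₁, v₂` with identical preference orders into one voter with
utility `u₁ + u₂` preserves, for every bundle, the total λ-median satisfaction; hence a
budget-feasible bundle reaching the target exists in one instance iff in the other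
(the remaining voters `W` are unchanged). -/
theorem stmt2 {P W : Type*} [Fintype P] [Fintype W]
    (c : P → ℕ) (u₁ u₂ : P → ℕ) (utilW : W → P → ℕ) (lam b tgt : ℕ)
    (hsame : ∀ p p', u₁ p > u₁ p' ↔ u₂ p > u₂ p') :
    (∀ Z : Finset P,
      medSat u₁ lam Z + medSat u₂ lam Z = medSat (fun p => u₁ p + u₂ p) lam Z) ∧
    ((∃ Z : Finset P, (∑ q ∈ Z, c q) ≤ b ∧
        tgt ≤ (∑ w : W, medSat (utilW w) lam Z) + (medSat u₁ lam Z + medSat u₂ lam Z)) ↔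
      (∃ Z : Finset P, (∑ q ∈ Z, c q) ≤ b ∧
        tgt ≤ (∑ w : W, medSat (utilW w) lam Z) + medSat (fun p => u₁ p + u₂ p) lam Z)) :=
  stmt2_general c u₁ u₂ utilW lam b tgt hsame
end

section
/- The reduction from Diverse Knapsack to Knapsack Cover is correct: the Diverse Knapsack instance has a bundle S ⊆ P of cost at most b with ∑_{v∈V} max_{p∈S} util_v(p) ≥ u_tgt if and only if the Knapsack Cover instance (with U₁ = V, U₂ = P, family of all pairs {X, r} for X ⊆ V, r ∈ P, cost({X,r}) = c(r), profit({X,r}) = ∑_{v∈X} util_v(r)) has a subfamily Z of pairwise-disjoint first components whose first components union to V, of total cost at most b, and total profit at least u_tgt. -/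
/-!
A bundle `S` yields a cover by sending every voter to an item of `S` she likes best and grouping
the voters by that item: the groups are disjoint and cover `V`, the items used are exactly those of
`S`, and the profit is the bundle's total satisfaction. Conversely, from a cover `Z` take the bundle
of items occurring in `Z`: it costs at most `Z`, since an item repeated in `Z` is paid only once,
and in each pair `(X, r)` every voter of `X` values the bundle at least as much as `r`; as the sets
`X` are disjoint, summing over `Z` counts every voter at most once.
-/

open Finset

namespace KnapsackCover

section Fibers

variable {P V : Type*} [DecidableEq P] [Fintype V]

def fiberFamily (S : Finset P) (f : V → P) : Finset (Finset V × P) :=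
  S.map ⟨fun p => (univ.filter fun v => f v = p, p), fun _ _ h => (Prod.ext_iff.1 h).2⟩

lemma pairwiseDisjoint_fiberFamily (S : Finset P) (f : V → P) :
    (fiberFamily S f : Set (Finset V × P)).PairwiseDisjoint Prod.fst := by
  simp only [fiberFamily, coe_map]
  rintro _ ⟨p, -, rfl⟩ _ ⟨q, -, rfl⟩ hpq
  refine disjoint_filter.2 fun v _ hp hq => hpq ?_
  rw [← hp, ← hq]

lemma exists_mem_fiberFamily {S : Finset P} {f : V → P} {v : V} (hv : f v ∈ S) :
    ∃ z ∈ fiberFamily S f, v ∈ z.1 :=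
  ⟨_, mem_map_of_mem _ hv, mem_filter.2 ⟨mem_univ v, rfl⟩⟩

lemma sum_fiberFamily {M : Type*} [AddCommMonoid M] (S : Finset P) (f : V → P)
    (g : Finset V × P → M) :
    ∑ z ∈ fiberFamily S f, g z = ∑ p ∈ S, g (univ.filter fun v => f v = p, p) :=
  sum_map ..

lemma sum_sum_fiberFamily {M : Type*} [AddCommMonoid M] {S : Finset P} {f : V → P}
    (hf : ∀ v, f v ∈ S) (u : V → P → M) :
    ∑ z ∈ fiberFamily S f, ∑ v ∈ z.1, u v z.2 = ∑ v, u v (f v) := by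
  rw [sum_fiberFamily, ← sum_fiberwise_of_maps_to (s := univ) (fun v _ => hf v)]
  refine sum_congr rfl fun p _ => sum_congr rfl fun v hv => ?_
  rw [(mem_filter.1 hv).2]

end Fibers

lemma sum_sum_le_sum_sup_image_snd {P V M : Type*} [DecidableEq P] [Fintype V]
    [AddCommMonoid M] [SemilatticeSup M] [OrderBot M] [IsOrderedAddMonoid M]
    [CanonicallyOrderedAdd M] {Z : Finset (Finset V × P)}
    (hZ : (Z : Set (Finset V × P)).PairwiseDisjoint Prod.fst) (u : V → P → M) :
    ∑ z ∈ Z, ∑ v ∈ z.1, u v z.2 ≤ ∑ v, (Z.image Prod.snd).sup (u v) :=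
  calc ∑ z ∈ Z, ∑ v ∈ z.1, u v z.2
      ≤ ∑ z ∈ Z, ∑ v ∈ z.1, (Z.image Prod.snd).sup (u v) :=
        sum_le_sum fun _ hz => sum_le_sum fun _ _ => le_sup (mem_image_of_mem _ hz)
    _ = ∑ v ∈ Z.disjiUnion Prod.fst hZ, (Z.image Prod.snd).sup (u v) := (sum_disjiUnion ..).symm
    _ ≤ ∑ v, (Z.image Prod.snd).sup (u v) := sum_le_sum_of_subset (subset_univ _)

end KnapsackCover

open KnapsackCover in
theorem stmt8_general {P V : Type*} [Fintype V] [DecidableEq P]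
    (c : P → ℕ) (util : V → P → ℕ) (b tgt : ℕ) (htgt : 0 < tgt) :
    (∃ S : Finset P, (∑ p ∈ S, c p) ≤ b ∧ tgt ≤ ∑ v : V, S.sup (util v)) ↔
    (∃ Z : Finset (Finset V × P),
      (∀ z₁ ∈ Z, ∀ z₂ ∈ Z, z₁ ≠ z₂ → Disjoint z₁.1 z₂.1) ∧
      (∀ v : V, ∃ z ∈ Z, v ∈ z.1) ∧
      (∑ z ∈ Z, c z.2) ≤ b ∧
      tgt ≤ ∑ z ∈ Z, ∑ v ∈ z.1, util v z.2) := by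
  constructor
  · rintro ⟨S, hcost, hprof⟩
    have hS : S.Nonempty := by
      rw [nonempty_iff_ne_empty]
      rintro rfl
      simp only [sup_empty, Nat.bot_eq_zero, sum_const_zero, nonpos_iff_eq_zero] at hprof
      omega
    choose f hfS hf using fun v => S.exists_mem_eq_sup hS (util v)
    refine ⟨fiberFamily S f, pairwiseDisjoint_fiberFamily S f,
      fun v => exists_mem_fiberFamily (hfS v), ?_, ?_⟩
    · rwa [sum_fiberFamily]
    · rwa [sum_sum_fiberFamily hfS, ← sum_congr rfl fun v _ => hf v]
  · rintro ⟨Z, hdisj, -, hcost, hprof⟩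
    exact ⟨Z.image Prod.snd, (sum_image_le_of_nonneg fun _ _ => Nat.zero_le _).trans hcost,
      hprof.trans (sum_sum_le_sum_sup_image_snd hdisj util)⟩

/-- Correctness of the reduction from Diverse Knapsack to Knapsack Cover: there is a bundle
`S ⊆ P` of cost at most `b` with `∑_v max_{p∈S} util_v(p) ≥ u_tgt` iff there is a family
`Z` of pairs `(X, r)` (`X ⊆ V`, `r ∈ P`) with pairwise-disjoint first components covering
all of `V`, total cost `∑ c(r) ≤ b`, and total profit `∑_{(X,r)∈Z} ∑_{v∈X} util_v(r) ≥ u_tgt`. -/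
theorem stmt8 {P V : Type*} [Fintype P] [Fintype V] [DecidableEq P] [DecidableEq V]
    [Nonempty V] (c : P → ℕ) (util : V → P → ℕ) (b tgt : ℕ) (htgt : 0 < tgt) :
    (∃ S : Finset P, (∑ p ∈ S, c p) ≤ b ∧ tgt ≤ ∑ v : V, S.sup (util v)) ↔
    (∃ Z : Finset (Finset V × P),
      (∀ z₁ ∈ Z, ∀ z₂ ∈ Z, z₁ ≠ z₂ → Disjoint z₁.1 z₂.1) ∧
      (∀ v : V, ∃ z ∈ Z, v ∈ z.1) ∧
      (∑ z ∈ Z, c z.2) ≤ b ∧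
      tgt ≤ ∑ z ∈ Z, ∑ v ∈ z.1, util v z.2) :=
  stmt8_general c util b tgt htgt
end

section
/- FPTAS approximation lemma: let 0 < ε ≤ 1, let u_max = max over voters v and items p of util_v(p) > 0, and suppose s is a positive integer with u_max = 2ns/ε (n = |V|). Define ũ_v(p) = s·⌈util_v(p)/s⌉. Let S* be a bundle of cost at most b maximizing ũ(S*) := ∑_v max_{p∈S*} ũ_v(p) over all bundles of cost at most b. Then for every bundle S of cost at most b, util(S) ≤ (1+ε)·util(S*), where util(T) = ∑_v max_{p∈T} util_v(p). -/
/-!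
Rounding each utility up to a multiple of `s` raises it by less than `s`, so for every bundle the
rounded welfare lies between the true welfare `W` and `W + n s`. Hence every feasible `S` has
`W(S) ≤ W̃(S) ≤ W̃(S*) ≤ W(S*) + n s`. Comparing `S*` with the affordable singleton of an item of
utility `u_max` gives `u_max ≤ W(S*) + n s`; as `ε u_max = 2 n s` and `ε ≤ 1`, this yields
`n s ≤ ε W(S*)`.
-/

open Finset

section Welfare

variable {P V : Type*} [Fintype V]

def welfare (f : V → P → ℕ) (T : Finset P) : ℕ :=
  ∑ v, T.sup (f v)

theorem welfare_mono_left {f g : V → P → ℕ} (h : ∀ v p, f v p ≤ g v p) (T : Finset P) :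
    welfare f T ≤ welfare g T :=
  sum_le_sum fun v _ => sup_mono_fun fun p _ => h v p

theorem welfare_le_add_card_mul {f g : V → P → ℕ} {s : ℕ} (h : ∀ v p, g v p ≤ f v p + s)
    (T : Finset P) : welfare g T ≤ welfare f T + Fintype.card V * s := by
  calc welfare g T ≤ ∑ v, (T.sup (f v) + s) :=
        sum_le_sum fun v _ => Finset.sup_le fun p hp =>
          (h v p).trans (Nat.add_le_add_right (le_sup hp) s)
    _ = welfare f T + Fintype.card V * s := by
        rw [sum_add_distrib, sum_const, smul_eq_mul, card_univ, welfare]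

theorem le_welfare_singleton (f : V → P → ℕ) (v : V) (p : P) : f v p ≤ welfare f {p} := by
  rw [welfare, ← sup_singleton (f := f v) (b := p)]
  exact single_le_sum (f := fun w => ({p} : Finset P).sup (f w)) (fun _ _ => Nat.zero_le _)
    (mem_univ v)

end Welfare

def roundUp (s u : ℕ) : ℕ :=
  s * ⌈(u : ℚ) / s⌉₊

theorem le_roundUp {s : ℕ} (hs : 0 < s) (u : ℕ) : u ≤ roundUp s u := by
  have hs' : (0 : ℚ) < s := by exact_mod_cast hs
  have h : (u : ℚ) ≤ s * ⌈(u : ℚ) / s⌉₊ := by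
    rw [mul_comm, ← div_le_iff₀ hs']
    exact Nat.le_ceil _
  exact_mod_cast h

theorem roundUp_le_add (s u : ℕ) : roundUp s u ≤ u + s := by
  rcases Nat.eq_zero_or_pos s with rfl | hs
  · simp [roundUp]
  have hs' : (0 : ℚ) < s := by exact_mod_cast hs
  have h : (s : ℚ) * ⌈(u : ℚ) / s⌉₊ ≤ u + s := by
    calc (s : ℚ) * ⌈(u : ℚ) / s⌉₊ ≤ s * ((u : ℚ) / s + 1) :=
          mul_le_mul_of_nonneg_left (Nat.ceil_lt_add_one (by positivity)).le hs'.le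
      _ = u + s := by field_simp
  exact_mod_cast h

theorem le_mul_of_two_mul_le {ε M U N : ℚ} (hε0 : 0 ≤ ε) (hε1 : ε ≤ 1) (hN : 0 ≤ N)
    (hεM : 2 * N ≤ ε * M) (hM : M ≤ U + N) : N ≤ ε * U := by
  linarith [mul_le_mul_of_nonneg_left hM hε0, mul_le_mul_of_nonneg_right hε1 hN]

theorem stmt13_general {P V : Type*} [Fintype V]
    (c : P → ℕ) (util : V → P → ℕ) (b : ℕ)
    (ε : ℚ) (hε0 : 0 < ε) (hε1 : ε ≤ 1)
    (s : ℕ) (hs : 0 < s) (umax : ℕ)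
    (humax' : ∃ v p, util v p = umax)
    (hus : (umax : ℚ) = 2 * (Fintype.card V) * s / ε)
    (haff : ∀ p : P, (∃ v, util v p = umax) → c p ≤ b)
    (Sstar : Finset P)
    (hopt : ∀ T : Finset P, T.Nonempty → (∑ p ∈ T, c p) ≤ b →
      (∑ v : V, T.sup fun p => s * ⌈(util v p : ℚ) / s⌉₊) ≤
        ∑ v : V, Sstar.sup fun p => s * ⌈(util v p : ℚ) / s⌉₊) :
    ∀ S : Finset P, S.Nonempty → (∑ p ∈ S, c p) ≤ b →
      ((∑ v : V, S.sup (util v) : ℕ) : ℚ) ≤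
        (1 + ε) * ((∑ v : V, Sstar.sup (util v) : ℕ) : ℚ) := by
  intro S hSne hcost
  set rounded : V → P → ℕ := fun v p => roundUp s (util v p)
  have hstar : welfare rounded Sstar ≤ welfare util Sstar + Fintype.card V * s :=
    welfare_le_add_card_mul (fun v p => roundUp_le_add s (util v p)) Sstar
  have hfeasible : welfare util S ≤ welfare util Sstar + Fintype.card V * s :=
    (welfare_mono_left (fun v p => le_roundUp hs (util v p)) S).trans
      ((hopt S hSne hcost).trans hstar)
  obtain ⟨v, p, hp⟩ := humax'
  have hmax : umax ≤ welfare util Sstar + Fintype.card V * s := by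
    calc umax ≤ welfare rounded {p} :=
          hp ▸ (le_roundUp hs _).trans (le_welfare_singleton rounded v p)
      _ ≤ welfare rounded Sstar :=
          hopt {p} (singleton_nonempty p) (by simpa using haff p ⟨v, hp⟩)
      _ ≤ _ := hstar
  have hεumax : 2 * (Fintype.card V * s : ℚ) ≤ ε * umax := by
    rw [hus, mul_div_cancel₀ _ hε0.ne', mul_assoc]
  have herror : (Fintype.card V * s : ℚ) ≤ ε * welfare util Sstar :=
    le_mul_of_two_mul_le hε0.le hε1 (by positivity) hεumax (by exact_mod_cast hmax)
  have hS' : (welfare util S : ℚ) ≤ welfare util Sstar + Fintype.card V * s := by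
    exact_mod_cast hfeasible
  change (welfare util S : ℚ) ≤ (1 + ε) * welfare util Sstar
  linarith

/-- FPTAS approximation lemma: let `0 < ε ≤ 1`, `u_max > 0` the maximum utility (attained,
and every item attaining it is affordable), `s` a positive integer with `u_max = 2ns/ε`
(`n = |V|`), and `ũ_v(p) = s·⌈util_v(p)/s⌉`. If `S*` is a budget-feasible bundle maximizing
the rounded total satisfaction `∑_v max_{p∈S*} ũ_v(p)`, then every budget-feasible bundle
`S` satisfies `util(S) ≤ (1+ε)·util(S*)`. -/
theorem stmt13 {P V : Type*} [Fintype P] [Fintype V] [Nonempty V]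
    (c : P → ℕ) (util : V → P → ℕ) (b : ℕ)
    (ε : ℚ) (hε0 : 0 < ε) (hε1 : ε ≤ 1)
    (s : ℕ) (hs : 0 < s) (umax : ℕ) (humaxpos : 0 < umax)
    (humax : ∀ v p, util v p ≤ umax) (humax' : ∃ v p, util v p = umax)
    (hus : (umax : ℚ) = 2 * (Fintype.card V) * s / ε)
    (haff : ∀ p : P, (∃ v, util v p = umax) → c p ≤ b)
    (Sstar : Finset P) (hS0 : Sstar.Nonempty) (hSc : (∑ p ∈ Sstar, c p) ≤ b)
    (hopt : ∀ T : Finset P, T.Nonempty → (∑ p ∈ T, c p) ≤ b →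
      (∑ v : V, T.sup fun p => s * ⌈(util v p : ℚ) / s⌉₊) ≤
        ∑ v : V, Sstar.sup fun p => s * ⌈(util v p : ℚ) / s⌉₊) :
    ∀ S : Finset P, S.Nonempty → (∑ p ∈ S, c p) ≤ b →
      ((∑ v : V, S.sup (util v) : ℕ) : ℚ) ≤
        (1 + ε) * ((∑ v : V, Sstar.sup (util v) : ℕ) : ℚ) :=
  stmt13_general c util b ε hε0 hε1 s hs umax humax' hus haff Sstar hopt
end
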